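/- Under the assumptions that HN = 0, NᵀN = I, S = NᵀC₊N is invertible, and β* is any vector with Hβ* = h, the vector β̂ = NS⁻¹Nᵀb + (I_K − NS⁻¹NᵀC₊)β* satisfies both NᵀC₊β̂ = Nᵀb and Hβ̂ = h. -/

import Mathlib

/-!
With `S = W C N` invertible, `W C · N S⁻¹ = 1`, so `W C` sends `N S⁻¹ W b` to `W b` and
annihilates `1 - N S⁻¹ W C`; and `H N = 0` makes `H` annihilate `N S⁻¹ W` and fix
`1 - N S⁻¹ W C`. The theorem is the case `W = Nᵀ`.
-/

open Matrix

namespace Matrix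

variable {R l m n o p : Type*}

theorem mul_mul_nonsing_inv_mul_cancel_left [CommRing R] [Fintype m] [Fintype n] [Fintype o]
    [DecidableEq m] {W : Matrix m n R} {C : Matrix n o R}
    {N : Matrix o m R} (hS : IsUnit (W * C * N)) (V : Matrix m l R) :
    W * C * (N * (W * C * N)⁻¹ * V) = V := by
  rw [← Matrix.mul_assoc, ← Matrix.mul_assoc,
    mul_nonsing_inv _ ((isUnit_iff_isUnit_det _).mp hS), Matrix.one_mul]

theorem mul_one_sub_mul_nonsing_inv_mul_eq_zero [CommRing R] [Fintype m] [Fintype n]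
    [Fintype o] [DecidableEq m] [DecidableEq o] {W : Matrix m n R} {C : Matrix n o R}
    {N : Matrix o m R} (hS : IsUnit (W * C * N)) :
    W * C * (1 - N * (W * C * N)⁻¹ * W * C) = 0 := by
  rw [Matrix.mul_sub, Matrix.mul_one, ← Matrix.mul_assoc,
    mul_mul_nonsing_inv_mul_cancel_left hS, sub_self]

theorem mul_mul_mul_eq_zero_of_mul_eq_zero [NonUnitalSemiring R] [Fintype m] [Fintype n]
    [Fintype o] {H : Matrix l o R} {N : Matrix o m R}
    (hHN : H * N = 0) (A : Matrix m n R) (B : Matrix n p R) : H * (N * A * B) = 0 := by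
  rw [← Matrix.mul_assoc, ← Matrix.mul_assoc, hHN, Matrix.zero_mul, Matrix.zero_mul]

theorem mul_one_sub_mul_mul_mul_eq_self_of_mul_eq_zero [Ring R] [Fintype m] [Fintype n]
    [Fintype o] [Fintype p] [DecidableEq o] {H : Matrix l o R} {N : Matrix o m R}
    (hHN : H * N = 0) (A : Matrix m n R) (B : Matrix n p R) (D : Matrix p o R) :
    H * (1 - N * A * B * D) = H := by
  rw [Matrix.mul_sub, Matrix.mul_one, ← Matrix.mul_assoc,
    mul_mul_mul_eq_zero_of_mul_eq_zero hHN, Matrix.zero_mul, sub_zero]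

end Matrix

theorem stmt_15_general (K q p : ℕ) (C : Matrix (Fin K) (Fin K) ℝ)
    (H : Matrix (Fin q) (Fin K) ℝ) (N : Matrix (Fin K) (Fin p) ℝ)
    (hHN : H * N = 0)
    (hS : IsUnit (Nᵀ * C * N))
    (b : Fin K → ℝ) (h : Fin q → ℝ)
    (βs : Fin K → ℝ) (hβs : H *ᵥ βs = h) :
    (Nᵀ * C) *ᵥ ((N * (Nᵀ * C * N)⁻¹ * Nᵀ) *ᵥ b +
        (1 - N * (Nᵀ * C * N)⁻¹ * Nᵀ * C) *ᵥ βs) = Nᵀ *ᵥ b ∧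
    H *ᵥ ((N * (Nᵀ * C * N)⁻¹ * Nᵀ) *ᵥ b +
        (1 - N * (Nᵀ * C * N)⁻¹ * Nᵀ * C) *ᵥ βs) = h := by
  constructor
  · rw [mulVec_add, mulVec_mulVec, mulVec_mulVec, mul_mul_nonsing_inv_mul_cancel_left hS,
      mul_one_sub_mul_nonsing_inv_mul_eq_zero hS, zero_mulVec, add_zero]
  · rw [mulVec_add, mulVec_mulVec, mulVec_mulVec, mul_mul_mul_eq_zero_of_mul_eq_zero hHN _ Nᵀ,
      mul_one_sub_mul_mul_mul_eq_self_of_mul_eq_zero hHN _ Nᵀ C, zero_mulVec, zero_add, hβs]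

/-- Theorem 3: with `H N = 0`, `Nᵀ N = I`, `S = Nᵀ C₊ N` invertible and `H β* = h`,
the vector `β̂ = N S⁻¹ Nᵀ b + (I − N S⁻¹ Nᵀ C₊) β*` solves both equations
`Nᵀ C₊ β̂ = Nᵀ b` and `H β̂ = h`. -/
theorem stmt_15 (K q p : ℕ) (C : Matrix (Fin K) (Fin K) ℝ)
    (H : Matrix (Fin q) (Fin K) ℝ) (N : Matrix (Fin K) (Fin p) ℝ)
    (hHN : H * N = 0) (hN : Nᵀ * N = 1)
    (hS : IsUnit (Nᵀ * C * N))
    (b : Fin K → ℝ) (h : Fin q → ℝ)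
    (βs : Fin K → ℝ) (hβs : H *ᵥ βs = h) :
    (Nᵀ * C) *ᵥ ((N * (Nᵀ * C * N)⁻¹ * Nᵀ) *ᵥ b +
        (1 - N * (Nᵀ * C * N)⁻¹ * Nᵀ * C) *ᵥ βs) = Nᵀ *ᵥ b ∧
    H *ᵥ ((N * (Nᵀ * C * N)⁻¹ * Nᵀ) *ᵥ b +
        (1 - N * (Nᵀ * C * N)⁻¹ * Nᵀ * C) *ᵥ βs) = h :=
  stmt_15_general K q p C H N hHN hS b h βs hβs
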